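/- arXiv:1603.04459 — 4 statements merged into one kernel-verified Lean document; each statement's English description precedes it below -/
import Mathlib

section
/- Let K be a global field, φ ∈ O_{K,S}[x] a polynomial with good reduction at all primes outside S (unit leading coefficient), and b ∈ O_{K,S}. If p ∉ S is a prime with v_p(φ^n(b)) > 0 and v_p(φ^m(b)) > 0 for some 1 ≤ m < n with φ^m(b) ≠ 0, then v_p(φ^{n−m}(0)) > 0. -/
lemma iter_map_comm {R S : Type*} [CommRing R] [CommRing S] (f : R →+* S)
    (φ : Polynomial R) (k : ℕ) (x : R) :
    f ((fun x => φ.eval x)^[k] x) = (fun y => (φ.map f).eval y)^[k] (f x) := by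
  induction k generalizing x with
  | zero => simp
  | succ k ih =>
    rw [Function.iterate_succ_apply, Function.iterate_succ_apply, ih,
      Polynomial.eval_map, Polynomial.eval₂_at_apply]

/-- Let `R = O_{K,S}` be the ring of `S`-integers (here an arbitrary
commutative ring, where `φ` having coefficients in `R` encodes good reduction outside `S`),
`φ ∈ R[x]`, `b ∈ R`, and `P` a prime of `R` (a prime outside `S`).  If
`v_P(φ^n(b)) > 0` and `v_P(φ^m(b)) > 0` for some `1 ≤ m < n` with `φ^m(b) ≠ 0`, then
`v_P(φ^{n−m}(0)) > 0`. -/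
theorem primitive_divisor_congruence {R : Type*} [CommRing R]
    (φ : Polynomial R) (hdeg : 2 ≤ φ.natDegree) (hlc : IsUnit φ.leadingCoeff)
    (P : Ideal R) (hP : P.IsPrime) (b : R) (n m : ℕ)
    (hm1 : 1 ≤ m) (hmn : m < n)
    (hbm : (fun x => φ.eval x)^[m] b ≠ 0)
    (hn : (fun x => φ.eval x)^[n] b ∈ P)
    (hm : (fun x => φ.eval x)^[m] b ∈ P) :
    (fun x => φ.eval x)^[n - m] 0 ∈ P := by
  set f := Ideal.Quotient.mk P
  rw [← Ideal.Quotient.eq_zero_iff_mem] at hn hm ⊢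
  have key := iter_map_comm f φ (n - m) ((fun x => φ.eval x)^[m] b)
  rw [← Function.iterate_add_apply, Nat.sub_add_cancel hmn.le] at key
  rw [iter_map_comm f φ (n - m) 0, map_zero, ← hm, ← key, hn]
  exact hm.symm
end

section
/- Let k be a field of characteristic zero, K = k(t), and φ(x) = x^d + t ∈ K[x] with d ≥ 2. Then for every n ≥ 1, the polynomial φ^n(0) ∈ k[t] (the n-th iterate of φ evaluated at 0, viewed as a polynomial in t) is squarefree. -/
open Polynomial

/-! Modulo `d`, the polynomial `φⁿ(0) = φⁿ⁻¹(0)^d + t ∈ ℤ[t]` has derivative `1`, so it is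
separable there. As `φⁿ(0)` is monic, its resultant with its derivative, taken in the fixed degrees
`(deg, deg - 1)` so that it commutes with reduction, is then a unit modulo `d`, hence a nonzero
integer, hence nonzero in any field of characteristic zero, where it forces separability. -/

namespace Polynomial

variable {R : Type*} [CommRing R]

theorem isCoprime_of_isUnit_resultant {f g : R[X]} {m n : ℕ} (hf : f.natDegree ≤ m)
    (hg : g.natDegree ≤ n) (hmn : m ≠ 0 ∨ n ≠ 0) (h : IsUnit (resultant f g m n)) :
    IsCoprime f g := by
  obtain ⟨a, b, -, -, hab⟩ := exists_mul_add_mul_eq_C_resultant f g hf hg hmn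
  refine ⟨C h.unit⁻¹.1 * a, C h.unit⁻¹.1 * b, ?_⟩
  rw [mul_assoc, mul_assoc, ← mul_add, mul_comm a, mul_comm b, hab, ← C_mul,
    IsUnit.val_inv_mul, C_1]

theorem Separable.isUnit_resultant_derivative {f : R[X]} (hf : f.Monic) (hsep : f.Separable) :
    IsUnit (resultant f (derivative f) f.natDegree (f.natDegree - 1)) := by
  obtain ⟨k, hk⟩ : ∃ k, f.natDegree - 1 = (derivative f).natDegree + k :=
    Nat.exists_eq_add_of_le (natDegree_derivative_le f)
  rw [hk, resultant_add_right_deg _ _ _ _ _ le_rfl, coeff_natDegree, hf.leadingCoeff, one_pow,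
    one_mul, isUnit_resultant_iff_isCoprime hf]
  exact hsep

theorem Monic.separable_map_of_separable_map {A K : Type*} [CommRing A] [Nontrivial A] [Field K]
    {f : R[X]} (hf : f.Monic) (φ : R →+* A) (hφ : (f.map φ).Separable) (ψ : R →+* K)
    (hψ : Function.Injective ψ) : (f.map ψ).Separable := by
  rcases Nat.eq_zero_or_pos f.natDegree with hN | hN
  · rw [eq_one_of_monic_natDegree_zero hf hN, Polynomial.map_one]
    exact separable_one
  have hunit_A : IsUnit (φ (resultant f (derivative f) f.natDegree (f.natDegree - 1))) := by
    rw [← resultant_map_map, ← derivative_map, ← hf.natDegree_map φ]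
    exact hφ.isUnit_resultant_derivative (hf.map φ)
  have hres_ne : resultant f (derivative f) f.natDegree (f.natDegree - 1) ≠ 0 := by
    intro h
    rw [h, map_zero] at hunit_A
    exact not_isUnit_zero hunit_A
  refine isCoprime_of_isUnit_resultant natDegree_map_le
    ((natDegree_derivative_le _).trans (Nat.sub_le_sub_right natDegree_map_le 1))
    (Or.inl hN.ne') ?_
  rw [derivative_map, resultant_map_map]
  exact ((map_ne_zero_iff ψ hψ).mpr hres_ne).isUnit

end Polynomial

noncomputable def orbitPoly (R : Type*) [CommRing R] (d n : ℕ) : R[X] :=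
  (fun q : R[X] => q ^ d + X)^[n] 0

section orbitPoly

variable {R : Type*} [CommRing R] (d : ℕ)

theorem orbitPoly_succ (n : ℕ) : orbitPoly R d (n + 1) = orbitPoly R d n ^ d + X :=
  Function.iterate_succ_apply' _ _ _

theorem map_orbitPoly {S : Type*} [CommRing S] (φ : R →+* S) (n : ℕ) :
    (orbitPoly R d n).map φ = orbitPoly S d n := by
  induction n with
  | zero => simp [orbitPoly]
  | succ n ih => rw [orbitPoly_succ, orbitPoly_succ, Polynomial.map_add, Polynomial.map_pow, ih,
      map_X]

theorem orbitPoly_succ_monic_natDegree [Nontrivial R] (hd : 2 ≤ d) (n : ℕ) :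
    (orbitPoly R d (n + 1)).Monic ∧ (orbitPoly R d (n + 1)).natDegree = d ^ n := by
  induction n with
  | zero => simp [orbitPoly, zero_pow (by omega : d ≠ 0)]
  | succ n ih =>
    obtain ⟨hmon, hdeg⟩ := ih
    have hdeg_pow : (orbitPoly R d (n + 1) ^ d).natDegree = d ^ (n + 1) := by
      rw [hmon.natDegree_pow, hdeg, pow_succ, mul_comm]
    have hX_lt : degree (X : R[X]) < degree (orbitPoly R d (n + 1) ^ d) := by
      rw [degree_X, degree_eq_natDegree (hmon.pow d).ne_zero, hdeg_pow]
      exact_mod_cast Nat.one_lt_pow (by omega) (by omega)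
    rw [orbitPoly_succ]
    exact ⟨(hmon.pow d).add_of_left hX_lt, by rw [natDegree_add_eq_left_of_degree_lt hX_lt,
      hdeg_pow]⟩

theorem derivative_orbitPoly_succ (hd : (d : R) = 0) (n : ℕ) :
    derivative (orbitPoly R d (n + 1)) = 1 := by
  rw [orbitPoly_succ, derivative_add, derivative_pow, derivative_X, hd, map_zero, zero_mul,
    zero_mul, zero_add]

theorem separable_orbitPoly_succ (hd : (d : R) = 0) (n : ℕ) :
    (orbitPoly R d (n + 1)).Separable := by
  rw [separable_def, derivative_orbitPoly_succ d hd]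
  exact isCoprime_one_right

end orbitPoly

/-- Let `k` have characteristic zero, `K = k(t)`, and `φ(x) = x^d + t` with
`d ≥ 2`.  Then for every `n ≥ 1` the `n`-th orbit value `φ^n(0) ∈ k[t]`
(defined by `φ^1(0) = t`, `φ^n(0) = (φ^{n−1}(0))^d + t`) is squarefree. -/
theorem orbit_squarefree {k : Type*} [Field k] [CharZero k] (d : ℕ) (hd : 2 ≤ d)
    (n : ℕ) (hn : 1 ≤ n) :
    Squarefree ((fun q : Polynomial k => q ^ d + X)^[n] 0) := by
  obtain ⟨m, rfl⟩ : ∃ m, n = m + 1 := ⟨n - 1, by omega⟩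
  have : Fact (1 < d) := ⟨hd⟩
  have hsep_mod_d : ((orbitPoly ℤ d (m + 1)).map (Int.castRingHom (ZMod d))).Separable := by
    rw [map_orbitPoly]
    exact separable_orbitPoly_succ d (ZMod.natCast_self d) m
  have hsep := (orbitPoly_succ_monic_natDegree d hd m).1.separable_map_of_separable_map _
    hsep_mod_d (Int.castRingHom k) Int.cast_injective
  rw [map_orbitPoly] at hsep
  exact hsep.squarefree
end

section
/- Let φ(x) = x^d + t over K = k(t), k of characteristic zero, d ≥ 2. For each n ≥ 2, deg_t(φ^n(0)) = d^{n−1}, and d^{n−1} > Σ_{i=1}^{n−1} deg_t(φ^i(0)) = (d^{n−1} − 1)/(d − 1). Consequently, since φ^n(0) is squarefree in k[t], there is an irreducible polynomial in k[t] dividing φ^n(0) that divides none of φ^1(0), ..., φ^{n−1}(0). -/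
open Polynomial


noncomputable def Fz (d : ℕ) : ℕ → Polynomial ℤ := fun n => (fun q : Polynomial ℤ => q ^ d + X)^[n] 0

private lemma Fz_succ (d n : ℕ) : Fz d (n + 1) = (Fz d n) ^ d + X := by
  simp [Fz, Function.iterate_succ_apply']

private lemma Fz_one {d : ℕ} (hd : 2 ≤ d) : Fz d 1 = X := by
  have : d ≠ 0 := by omega
  simp [Fz, zero_pow this]

private lemma iter_map {R S : Type*} [CommRing R] [CommRing S] (f : R →+* S) (d n : ℕ) :
    ((fun q : Polynomial S => q ^ d + X)^[n] 0)
      = (((fun q : Polynomial R => q ^ d + X)^[n] 0)).map f := by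
  induction n with
  | zero => simp
  | succ n ih =>
    rw [Function.iterate_succ_apply', Function.iterate_succ_apply', ih]
    simp [Polynomial.map_add, Polynomial.map_pow]

private lemma Fz_monic_deg {d : ℕ} (hd : 2 ≤ d) :
    ∀ m : ℕ, (Fz d (m + 1)).Monic ∧ (Fz d (m + 1)).natDegree = d ^ m := by
  intro m
  induction m with
  | zero => rw [Fz_one hd]; exact ⟨monic_X, natDegree_X⟩
  | succ m ih =>
    obtain ⟨hmon, hdeg⟩ := ih
    have hpow : ((Fz d (m + 1)) ^ d).Monic := hmon.pow d
    have hdegpow : ((Fz d (m + 1)) ^ d).natDegree = d ^ (m + 1) := by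
      rw [natDegree_pow, hdeg]; ring
    have hlt : (X : Polynomial ℤ).degree < ((Fz d (m + 1)) ^ d).degree := by
      rw [degree_X, degree_eq_natDegree hpow.ne_zero, hdegpow]
      exact_mod_cast Nat.one_lt_pow (by omega) (by omega)
    constructor
    · rw [Fz_succ]; exact hpow.add_of_left hlt
    · rw [Fz_succ, natDegree_add_eq_left_of_degree_lt hlt, hdegpow]

private lemma isIntegral_aeval_int {K : Type*} [Field K] {α : K} (h : IsIntegral ℤ α)
    (P : Polynomial ℤ) : IsIntegral ℤ (aeval α P) := by
  induction P using Polynomial.induction_on' with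
  | add p q hp hq => rw [map_add]; exact hp.add hq
  | monomial n a => rw [aeval_monomial]; exact (isIntegral_algebraMap).mul (h.pow n)

private lemma Fz_separable {k : Type*} [Field k] [CharZero k] {d n : ℕ} (hd : 2 ≤ d)
    (hn : 2 ≤ n) : ((Fz d n).map (Int.castRingHom k)).Separable := by
  obtain ⟨m, rfl⟩ : ∃ m, n = m + 2 := ⟨n - 2, by omega⟩
  set f : Polynomial k := (Fz d (m + 2)).map (Int.castRingHom k) with hf
  have hmonic : (Fz d (m + 2)).Monic := (Fz_monic_deg hd (m + 1)).1
  have hfne : f ≠ 0 := (hmonic.map _).ne_zero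
  apply EuclideanDomain.isCoprime_of_dvd (fun h => hfne h.1)
  intro z hznu hzne hzf hzf'
  -- z has a root α in the algebraic closure
  set K := AlgebraicClosure k
  haveI : CharZero K := charZero_of_injective_algebraMap (algebraMap k K).injective
  have hzdeg : z.degree ≠ 0 := fun h => hznu (isUnit_iff_degree_eq_zero.mpr h)
  obtain ⟨α, hα⟩ := IsAlgClosed.exists_aeval_eq_zero K z hzdeg
  have root_of_dvd : ∀ w : Polynomial k, z ∣ w → aeval α w = 0 := by
    intro w hw
    have := map_dvd (aeval α) hw
    rw [hα] at this
    exact zero_dvd_iff.mp this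
  have hkey : ∀ P : Polynomial ℤ, aeval α (P.map (Int.castRingHom k)) = aeval α P := by
    intro P
    rw [show (Int.castRingHom k) = algebraMap ℤ k from rfl, aeval_map_algebraMap]
  have hroot : aeval α (Fz d (m + 2)) = 0 := by
    rw [← hkey]; exact root_of_dvd f hzf
  have hroot' : aeval α (derivative (Fz d (m + 2))) = 0 := by
    rw [← hkey]
    exact root_of_dvd _ (by rwa [← derivative_map])
  -- α is integral over ℤ
  have hαint : IsIntegral ℤ α := ⟨Fz d (m + 2), hmonic, by rwa [← aeval_def]⟩
  -- the derivative recursion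
  set p := d.minFac with hp
  have hpp : p.Prime := Nat.minFac_prime (by omega)
  set e := d / p with he
  have hde : d = p * e := (Nat.mul_div_cancel' d.minFac_dvd).symm
  have hder : derivative (Fz d (m + 2))
      = C (p : ℤ) * (C (e : ℤ) * (Fz d (m + 1)) ^ (d - 1) * derivative (Fz d (m + 1))) + 1 := by
    rw [Fz_succ, derivative_add, derivative_X, derivative_pow]
    rw [show ((d : ℤ)) = (p : ℤ) * (e : ℤ) by exact_mod_cast congrArg (Nat.cast : ℕ → ℤ) hde]
    ring_nf
    rw [C_mul]
    ring
  set x : K := aeval α (C (e : ℤ) * (Fz d (m + 1)) ^ (d - 1) * derivative (Fz d (m + 1))) with hx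
  have hxint : IsIntegral ℤ x := isIntegral_aeval_int hαint _
  have hpx : (p : K) * x = -1 := by
    have h := hroot'
    rw [hder] at h
    simp only [map_add, map_mul, map_one, aeval_C] at h
    have h2 : (algebraMap ℤ K) (p : ℤ) = (p : K) := by push_cast; simp
    rw [h2] at h
    rw [hx, map_mul, map_mul, aeval_C]
    linear_combination h
  -- hence -1/p is integral over ℤ, contradiction
  have hpK : (p : K) ≠ 0 := Nat.cast_ne_zero.mpr hpp.ne_zero
  haveI : IsScalarTower ℤ ℚ K := IsScalarTower.of_algebraMap_eq' (Subsingleton.elim _ _)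
  have hxq : x = algebraMap ℚ K (-1 / (p : ℚ)) := by
    have hcast : algebraMap ℚ K (-1 / (p : ℚ)) = -1 / (p : K) := by
      push_cast
      simp [div_eq_mul_inv]
    rw [hcast, eq_div_iff hpK]
    linear_combination hpx
  rw [hxq, isIntegral_algebraMap_iff (algebraMap ℚ K).injective] at hxint
  obtain ⟨y, hy⟩ := IsIntegrallyClosed.isIntegral_iff.mp hxint
  have hpQ : (p : ℚ) ≠ 0 := Nat.cast_ne_zero.mpr hpp.ne_zero
  have hyp : (y : ℚ) * (p : ℚ) = -1 := by
    have h3 : (y : ℚ) = -1 / (p : ℚ) := hy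
    rw [h3]
    field_simp
  have hypz : y * (p : ℤ) = -1 := by exact_mod_cast hyp
  have hdvd : (p : ℤ) ∣ 1 := ⟨-y, by linarith⟩
  have := Int.eq_one_of_dvd_one (by positivity) hdvd
  have : p = 1 := by exact_mod_cast this
  exact hpp.one_lt.ne' this

private lemma sqfree_dvd_of_prime_dvd {R : Type*} [CommRing R] [IsDomain R]
    [IsPrincipalIdealRing R] (b : R) :
    ∀ a : R, Squarefree a → (∀ p : R, Prime p → p ∣ a → p ∣ b) → a ∣ b := by
  intro a
  induction a using UniqueFactorizationMonoid.induction_on_prime with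
  | h₁ => intro h _; exact absurd h not_squarefree_zero
  | h₂ x hx => exact fun _ _ => hx.dvd
  | h₃ a p ha hp ih =>
    intro hsq hdvd
    have hpb : p ∣ b := hdvd p hp (dvd_mul_right p a)
    have hab : a ∣ b :=
      ih (hsq.squarefree_of_dvd (dvd_mul_left a p))
        (fun q hq hqa => hdvd q hq (hqa.mul_left p))
    have hpa : ¬ p ∣ a := fun hpa =>
      hp.not_unit (hsq p (mul_dvd_mul (dvd_refl p) hpa))
    exact (hp.irreducible.coprime_iff_not_dvd.mpr hpa).mul_dvd hpb hab


/-- For `φ(x) = x^d + t` over `K = k(t)`, `k` of characteristic zero and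
`d ≥ 2`, and `n ≥ 2`: `deg_t(φ^n(0)) = d^{n−1}`, the sum
`Σ_{i=1}^{n−1} deg_t(φ^i(0))` equals `(d^{n−1} − 1)/(d − 1)` and is `< d^{n−1}`;
consequently (`φ^n(0)` being squarefree) there is an irreducible polynomial dividing
`φ^n(0)` that divides none of `φ^1(0), …, φ^{n−1}(0)`. -/
theorem orbit_primitive_prime_divisor {k : Type*} [Field k] [CharZero k]
    (d : ℕ) (hd : 2 ≤ d) (n : ℕ) (hn : 2 ≤ n) :
    ((fun q : Polynomial k => q ^ d + X)^[n] 0).natDegree = d ^ (n - 1) ∧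
    (∑ i ∈ Finset.Icc 1 (n - 1),
        ((fun q : Polynomial k => q ^ d + X)^[i] 0).natDegree)
      = (d ^ (n - 1) - 1) / (d - 1) ∧
    (∑ i ∈ Finset.Icc 1 (n - 1),
        ((fun q : Polynomial k => q ^ d + X)^[i] 0).natDegree) < d ^ (n - 1) ∧
    ∃ q : Polynomial k, Irreducible q ∧ q ∣ (fun q : Polynomial k => q ^ d + X)^[n] 0 ∧
      ∀ i ∈ Finset.Icc 1 (n - 1), ¬ q ∣ (fun q : Polynomial k => q ^ d + X)^[i] 0 := by
  set Φ : ℕ → Polynomial k := fun i => (fun q : Polynomial k => q ^ d + X)^[i] 0 with hΦ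
  have hΦmap : ∀ i, Φ i = (Fz d i).map (Int.castRingHom k) := fun i =>
    iter_map (Int.castRingHom k) d i
  have hmono : ∀ i, 1 ≤ i → (Φ i).Monic := by
    intro i hi
    obtain ⟨j, rfl⟩ : ∃ j, i = j + 1 := ⟨i - 1, by omega⟩
    rw [hΦmap]
    exact ((Fz_monic_deg hd j).1).map _
  have hdeg : ∀ i, 1 ≤ i → (Φ i).natDegree = d ^ (i - 1) := by
    intro i hi
    obtain ⟨j, rfl⟩ : ∃ j, i = j + 1 := ⟨i - 1, by omega⟩
    rw [hΦmap]
    rw [((Fz_monic_deg hd j).1).natDegree_map]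
    simpa using (Fz_monic_deg hd j).2
  have hne : ∀ i, 1 ≤ i → Φ i ≠ 0 := fun i hi => (hmono i hi).ne_zero
  -- the degree computations
  have hdegn : (Φ n).natDegree = d ^ (n - 1) := hdeg n (by omega)
  have hsum : (∑ i ∈ Finset.Icc 1 (n - 1), (Φ i).natDegree)
      = ∑ j ∈ Finset.range (n - 1), d ^ j := by
    rw [show Finset.Icc 1 (n - 1) = Finset.Ico 1 n by
      rw [← Finset.Ico_add_one_right_eq_Icc]; congr 1; omega]
    rw [Finset.sum_Ico_eq_sum_range]
    apply Finset.sum_congr (by congr 1)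
    intro j hj
    rw [hdeg (1 + j) (by omega)]
    congr 1
    omega
  have hsum_eq : (∑ i ∈ Finset.Icc 1 (n - 1), (Φ i).natDegree)
      = (d ^ (n - 1) - 1) / (d - 1) := by
    rw [hsum, Nat.geomSum_eq hd]
  have hsum_lt : (∑ i ∈ Finset.Icc 1 (n - 1), (Φ i).natDegree) < d ^ (n - 1) := by
    rw [hsum]
    exact Nat.geomSum_lt hd (fun j hj => Finset.mem_range.mp hj)
  refine ⟨hdegn, hsum_eq, hsum_lt, ?_⟩
  by_contra hcon
  push_neg at hcon
  -- every irreducible factor of Φ n divides the product of the earlier Φ i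
  have hsq : Squarefree (Φ n) := by
    rw [hΦmap]
    exact (Fz_separable hd hn).squarefree
  have hdvd : Φ n ∣ ∏ i ∈ Finset.Icc 1 (n - 1), Φ i := by
    apply sqfree_dvd_of_prime_dvd _ _ hsq
    intro q hq hqn
    obtain ⟨i, hi, hqi⟩ := hcon q hq.irreducible hqn
    exact hqi.trans (Finset.dvd_prod_of_mem _ hi)
  have hprodne : ∀ i ∈ Finset.Icc 1 (n - 1), Φ i ≠ 0 := by
    intro i hi
    exact hne i (Finset.mem_Icc.mp hi).1
  have hle := natDegree_le_of_dvd hdvd (Finset.prod_ne_zero_iff.mpr hprodne)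
  rw [natDegree_prod _ _ hprodne, hdegn] at hle
  omega
end

section
/- Let φ(x) = (x − γ)^2 + c be a quadratic polynomial over a field K of characteristic ≠ 2, and let φ^2(x) = ((x−γ)^2 + c − γ)^2 + c be its second iterate. Then disc(φ^2) = 0 if and only if the critical orbit values φ(γ) and φ^2(γ) satisfy φ(γ)·φ^2(γ) = 0. -/
open Polynomial

/-- Let `φ(x) = (x − γ)^2 + c` over a field of characteristic ≠ 2.  The
discriminant of the second iterate `φ^2(x) = ((x−γ)^2 + c − γ)^2 + c` vanishes (i.e.
`φ^2` is inseparable, having a repeated root) if and only if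
`φ(γ)·φ^2(γ) = c·((c − γ)^2 + c) = 0`. -/
theorem disc_second_iterate_eq_zero_iff {K : Type*} [Field K] (h2 : (2 : K) ≠ 0)
    (γ c : K) :
    ¬ (((X - C γ) ^ 2 + C c - C γ) ^ 2 + C c : Polynomial K).Separable ↔
      c * ((c - γ) ^ 2 + c) = 0 := by
  set L := AlgebraicClosure K
  set f := algebraMap K L
  have hf : Function.Injective f := f.injective
  have h2L : (2 : L) ≠ 0 := by
    rw [show (2 : L) = f 2 from (map_ofNat f 2).symm]
    exact (map_ne_zero f).mpr h2
  set p : Polynomial K := ((X - C γ) ^ 2 + C c - C γ) ^ 2 + C c with hp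
  have hderiv : p.derivative = 4 * ((X - C γ) ^ 2 + C c - C γ) * (X - C γ) := by
    simp only [hp, derivative_add, derivative_sub, derivative_pow, derivative_C, derivative_X,
      Nat.cast_ofNat, map_ofNat]
    ring
  rw [Polynomial.Separable, Polynomial.isCoprime_iff_aeval_ne_zero_of_isAlgClosed K L]
  push_neg
  constructor
  · rintro ⟨a, ha, ha'⟩
    rw [hderiv] at ha'
    simp only [hp, map_add, map_sub, map_pow, map_mul, aeval_X, aeval_C, map_ofNat] at ha ha'
    have h4 : (4 : L) ≠ 0 := by
      have : (4 : L) = 2 * 2 := by norm_num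
      rw [this]; exact mul_ne_zero h2L h2L
    rcases mul_eq_zero.1 ha' with h | h
    · rcases mul_eq_zero.1 h with h | h
      · exact absurd h h4
      · -- (a - γ)^2 + c - γ = 0, so from ha : c = 0
        rw [h] at ha
        have hc : f c = 0 := by simpa using ha
        have : c = 0 := hf (by simpa using hc)
        rw [this]; ring
    · -- a = γ
      have haγ : a = f γ := by linear_combination h
      rw [haγ] at ha
      have : f ((c - γ) ^ 2 + c) = 0 := by
        simp only [map_add, map_sub, map_pow]
        linear_combination ha
      have : (c - γ) ^ 2 + c = 0 := hf (by simpa using this)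
      rw [this]; ring
  · intro h
    rcases mul_eq_zero.1 h with hc | hc
    · -- c = 0 : take a root of (x - γ)^2 = γ - c
      obtain ⟨z, hz⟩ := IsAlgClosed.exists_pow_nat_eq (k := L) (f γ - f c) zero_lt_two
      refine ⟨z + f γ, ?_, ?_⟩
      · simp only [hp, map_add, map_sub, map_pow, aeval_X, aeval_C]
        have hcL : f c = 0 := by rw [hc]; simp
        have hz' : z ^ 2 = f γ := by rw [hcL, sub_zero] at hz; exact hz
        rw [hcL]
        linear_combination (z ^ 2 - f γ) * hz'
      · rw [hderiv]
        simp only [map_mul, map_add, map_sub, map_pow, aeval_X, aeval_C, map_ofNat]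
        have hcL : f c = 0 := by rw [hc]; simp
        have hz' : z ^ 2 = f γ := by rw [hcL, sub_zero] at hz; exact hz
        have : (z + f γ - f γ) ^ 2 + f c - f γ = 0 := by
          rw [hcL]; linear_combination hz'
        rw [this]; ring
    · -- (c - γ)^2 + c = 0 : take a = γ
      refine ⟨f γ, ?_, ?_⟩
      · simp only [hp, map_add, map_sub, map_pow, aeval_X, aeval_C]
        have : f ((c - γ) ^ 2 + c) = 0 := by rw [hc]; simp
        simp only [map_add, map_sub, map_pow] at this
        linear_combination this
      · rw [hderiv]
        simp only [map_mul, map_add, map_sub, map_pow, aeval_X, aeval_C]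
        ring
end
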